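/- Let S be a recursively enumerable set of nonempty lists of natural numbers. If X is a maximal element of V(S) and X is recursively presented (in particular if X is finitely presented), then X is a computable subset of ℕ (ComputablePred (· ∈ X)). -/

import Mathlib

/-- A set `X ⊆ ℕ` satisfies the Horn implications encoded by `S`:
a list `n₀ :: t ∈ S` means `(∀ m ∈ t, m ∈ X) → n₀ ∈ X`. -/
def SatisfiesHorn (S : Set (List ℕ)) (X : Set ℕ) : Prop :=
  ∀ n₀ : ℕ, ∀ t : List ℕ, (n₀ :: t) ∈ S → (∀ m ∈ t, m ∈ X) → n₀ ∈ X

/-- The quasivariety defined by `S`. -/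
def QV (S : Set (List ℕ)) : Set (Set ℕ) := {X | SatisfiesHorn S X}

/-- The closure of `Y`: the smallest element of `QV S` containing `Y`. -/
def QVclosure (S : Set (List ℕ)) (Y : Set ℕ) : Set ℕ :=
  ⋂₀ {X | X ∈ QV S ∧ Y ⊆ X}

/-- `A` is enumeration reducible to `B` via `f`. -/
def EnumRedVia (A B : Set ℕ) (f : ℕ × ℕ → Option (Finset ℕ)) : Prop :=
  Computable f ∧
    ∀ x : ℕ, x ∈ A ↔ ∃ n : ℕ, ∃ F : Finset ℕ, f (x, n) = some F ∧ ↑F ⊆ B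

/-- `A` is enumeration reducible to `B`. -/
def EnumRed (A B : Set ℕ) : Prop := ∃ f : ℕ × ℕ → Option (Finset ℕ), EnumRedVia A B f

/-- `X` is a maximal element of the quasivariety `QV S`. -/
def QVMaximal (S : Set (List ℕ)) (X : Set ℕ) : Prop :=
  X ∈ QV S ∧ ∀ Z ∈ QV S, X ⊆ Z → Z = X ∨ Z = Set.univ

/-!
The closure of an r.e. set under the r.e. family of Horn rules `S` is r.e., uniformly in the
set: `n ∈ QVclosure S B` iff some finite list containing `n` is a derivation, i.e. each entry
lies in `B` or is the head of a rule of `S` whose premises all occur further down the list,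
and being a derivation is a Σ₁ condition. Hence `X = QVclosure S Y` is r.e. If `X ≠ ℕ`, fix
`z ∉ X`; by maximality, `x ∉ X` iff `QVclosure S (insert x Y) = ℕ` iff `z` lies in it, so the
complement of `X` is r.e. as well, and Post's theorem makes `X` computable.
-/

namespace REPred

open Encodable

variable {α β : Type*} [Primcodable α] [Primcodable β]

theorem comp {p : β → Prop} {f : α → β} (hp : REPred p) (hf : Computable f) :
    REPred fun a => p (f a) :=
  Partrec.comp hp hf

theorem exists_primrecRel {p : α → Prop} (hp : REPred p) :
    ∃ r : α → ℕ → Prop, PrimrecRel r ∧ ∀ a, p a ↔ ∃ n, r a n := by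
  obtain ⟨c, hc⟩ := Nat.Partrec.Code.exists_code.1 hp
  refine ⟨fun a k => (Nat.Partrec.Code.evaln k c (encode a)).isSome, ?_, fun a => ?_⟩
  · refine Primrec₂.primrecRel (Primrec.of_eq ?_ fun _ => (Bool.decide_eq_true).symm)
    exact Primrec.option_isSome.comp <| Nat.Partrec.Code.primrec_evaln.comp <|
      (Primrec.snd.pair (Primrec.const c)).pair (Primrec.encode.comp Primrec.fst)
  · have hdom : p a ↔ (Nat.Partrec.Code.eval c (encode a)).Dom := by
      rw [hc]; simp [encodek, Part.dom_iff_mem, Part.mem_assert_iff]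
    simp only [hdom, Part.dom_iff_mem, Nat.Partrec.Code.evaln_complete, Option.isSome_iff_exists]
    exact ⟨fun ⟨x, k, hk⟩ => ⟨k, x, hk⟩, fun ⟨k, x, hk⟩ => ⟨x, k, hk⟩⟩

theorem of_exists_primrecRel {p : α → Prop} {r : α → β → Prop} (hr : PrimrecRel r)
    (h : ∀ a, p a ↔ ∃ b, r a b) : REPred p := by
  classical
  have hguard :
      Primrec fun x : (α × ℕ) × β => Option.guard (fun b => decide (r x.1.1 b)) x.2 :=
    Primrec.option_guard (p := fun (x : (α × ℕ) × β) b => r x.1.1 b)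
      (hr.comp (Primrec.fst.comp (Primrec.fst.comp Primrec.fst)) Primrec.snd) Primrec.snd
  have hf : Computable₂ fun a n => (decode (α := β) n).bind fun b => Option.guard (r a ·) b :=
    (Primrec.option_bind (Primrec.decode.comp Primrec.snd) hguard.to₂).to_comp
  refine (Partrec.rfindOpt hf).dom_re.of_eq fun a => ?_
  rw [Nat.rfindOpt_dom, h]
  constructor
  · rintro ⟨n, b, hb⟩
    simp only [Option.mem_def, Option.bind_eq_some_iff, Option.guard_eq_some_iff] at hb
    obtain ⟨_, _, rfl, hb⟩ := hb
    exact ⟨_, by simpa using hb⟩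
  · rintro ⟨b, hb⟩
    exact ⟨encode b, b, by simp [encodek, hb]⟩

theorem and {p q : α → Prop} (hp : REPred p) (hq : REPred q) : REPred fun a => p a ∧ q a := by
  obtain ⟨r, hr, hpr⟩ := hp.exists_primrecRel
  obtain ⟨s, hs, hqs⟩ := hq.exists_primrecRel
  refine of_exists_primrecRel (r := fun a (nm : ℕ × ℕ) => r a nm.1 ∧ s a nm.2)
    ((hr.comp Primrec.fst (Primrec.fst.comp Primrec.snd)).and
      (hs.comp Primrec.fst (Primrec.snd.comp Primrec.snd))) fun a => ?_
  simp [hpr, hqs]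

theorem or {p q : α → Prop} (hp : REPred p) (hq : REPred q) : REPred fun a => p a ∨ q a := by
  obtain ⟨r, hr, hpr⟩ := hp.exists_primrecRel
  obtain ⟨s, hs, hqs⟩ := hq.exists_primrecRel
  exact of_exists_primrecRel (r := fun a n => r a n ∨ s a n) (hr.or hs) fun a => by
    simp [hpr, hqs, exists_or]

theorem exists_snd {q : α → β → Prop} (hq : REPred fun x : α × β => q x.1 x.2) :
    REPred fun a => ∃ b, q a b := by
  obtain ⟨r, hr, hqr⟩ := hq.exists_primrecRel
  exact of_exists_primrecRel (r := fun a (bn : β × ℕ) => r (a, bn.1) bn.2)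
    (hr.comp (Primrec.fst.pair (Primrec.fst.comp Primrec.snd)) (Primrec.snd.comp Primrec.snd))
    fun a => (exists_congr fun b => hqr (a, b)).trans
      (Prod.exists (p := fun bn => r (a, bn.1) bn.2)).symm

theorem forall_lt {q : α → ℕ → Prop} (hq : REPred fun x : α × ℕ => q x.1 x.2) :
    REPred fun x : α × ℕ => ∀ i < x.2, q x.1 i := by
  have h := Partrec.nat_rec (f := fun x : α × ℕ => x.2) (g := fun _ => Part.some ())
    (h := fun x iu => Part.assert (q x.1 iu.1) fun _ => Part.some ()) Computable.snd
    (Partrec.const' _)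
    (hq.comp ((Computable.fst.comp Computable.fst).pair (Computable.fst.comp Computable.snd)))
  refine h.dom_re.of_eq fun ⟨a, n⟩ => ?_
  induction n with
  | zero => simp
  | succ n ih =>
    simp only at ih
    rw [Nat.forall_lt_succ_right, ← ih]
    simp [Part.dom_iff_mem, Part.mem_assert_iff]

end REPred

section Closure

variable {S : Set (List ℕ)} {B X : Set ℕ}

theorem subset_QVclosure (S : Set (List ℕ)) (B : Set ℕ) : B ⊆ QVclosure S B :=
  fun _ hb => Set.mem_sInter.2 fun _ hX => hX.2 hb

theorem QVclosure_mem_QV (S : Set (List ℕ)) (B : Set ℕ) : QVclosure S B ∈ QV S :=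
  fun n t ht hall => Set.mem_sInter.2 fun X hX =>
    hX.1 n t ht fun m hm => Set.mem_sInter.1 (hall m hm) X hX

theorem QVclosure_subset (hX : X ∈ QV S) (hBX : B ⊆ X) : QVclosure S B ⊆ X :=
  Set.sInter_subset_of_mem ⟨hX, hBX⟩

def HornJustified (S : Set (List ℕ)) (B : Set ℕ) (n : ℕ) (L : List ℕ) : Prop :=
  n ∈ B ∨ ∃ t, n :: t ∈ S ∧ t ⊆ L

def IsHornDerivation (S : Set (List ℕ)) (B : Set ℕ) : List ℕ → Prop
  | [] => True
  | n :: L => HornJustified S B n L ∧ IsHornDerivation S B L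

theorem HornJustified.mono {n : ℕ} {L L' : List ℕ} (h : HornJustified S B n L) (hL : L ⊆ L') :
    HornJustified S B n L' :=
  h.imp_right fun ⟨t, ht, htL⟩ => ⟨t, ht, List.Subset.trans htL hL⟩

theorem IsHornDerivation.append {L₁ L₂ : List ℕ} (h₁ : IsHornDerivation S B L₁)
    (h₂ : IsHornDerivation S B L₂) : IsHornDerivation S B (L₁ ++ L₂) := by
  induction L₁ with
  | nil => exact h₂
  | cons n L₁ ih => exact ⟨h₁.1.mono (List.subset_append_left _ _), ih h₁.2⟩

theorem IsHornDerivation.forall_mem {L : List ℕ} (hL : IsHornDerivation S B L) (hX : X ∈ QV S)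
    (hBX : B ⊆ X) : ∀ n ∈ L, n ∈ X := by
  induction L with
  | nil => simp
  | cons n L ih =>
    intro m hm
    rcases List.mem_cons.1 hm with rfl | hm
    · rcases hL.1 with hn | ⟨t, ht, htL⟩
      · exact hBX hn
      · exact hX m t ht fun k hk => ih hL.2 k (htL hk)
    · exact ih hL.2 m hm

theorem exists_isHornDerivation_superset {t : List ℕ}
    (h : ∀ m ∈ t, ∃ L, IsHornDerivation S B L ∧ m ∈ L) :
    ∃ L, IsHornDerivation S B L ∧ t ⊆ L := by
  induction t with
  | nil => exact ⟨[], trivial, List.nil_subset _⟩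
  | cons m t ih =>
    obtain ⟨L₁, hL₁, hm⟩ := h m List.mem_cons_self
    obtain ⟨L₂, hL₂, ht⟩ := ih fun k hk => h k (List.mem_cons_of_mem m hk)
    exact ⟨L₁ ++ L₂, hL₁.append hL₂,
      List.cons_subset.2 ⟨List.mem_append_left _ hm,
        List.Subset.trans ht (List.subset_append_right _ _)⟩⟩

theorem mem_QVclosure_iff_exists_isHornDerivation {n : ℕ} :
    n ∈ QVclosure S B ↔ ∃ L, IsHornDerivation S B L ∧ n ∈ L := by
  refine ⟨fun hn =>
    QVclosure_subset (X := {n | ∃ L, IsHornDerivation S B L ∧ n ∈ L}) ?_ ?_ hn, ?_⟩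
  · intro n t ht hall
    obtain ⟨L, hL, htL⟩ := exists_isHornDerivation_superset hall
    exact ⟨n :: L, ⟨Or.inr ⟨t, ht, htL⟩, hL⟩, List.mem_cons_self⟩
  · exact fun m hm => ⟨[m], ⟨Or.inl hm, trivial⟩, List.mem_singleton_self m⟩
  · rintro ⟨L, hL, hn⟩
    exact hL.forall_mem (QVclosure_mem_QV S B) (subset_QVclosure S B) n hn

theorem isHornDerivation_iff_forall_lt {L : List ℕ} :
    IsHornDerivation S B L ↔
      ∀ i < L.length, HornJustified S B (L.getD i 0) (L.drop (i + 1)) := by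
  induction L with
  | nil => simp [IsHornDerivation]
  | cons n L ih =>
    simp only [IsHornDerivation, ih, List.length_cons, Nat.forall_lt_succ_left,
      List.getD_cons_zero, List.getD_cons_succ, List.drop_succ_cons, List.drop_zero]

end Closure

theorem PrimrecRel.list_mem {α : Type*} [Primcodable α] :
    PrimrecRel fun (a : α) (L : List α) => a ∈ L :=
  (PrimrecRel.exists_mem_list Primrec.eq).swap.of_eq fun _ _ => by simp

theorem PrimrecRel.list_subset {α : Type*} [Primcodable α] :
    PrimrecRel fun (t L : List α) => t ⊆ L :=
  PrimrecRel.forall_mem_list PrimrecRel.list_mem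

section RE

variable {α : Type*} [Primcodable α] {S : Set (List ℕ)} {B : α → Set ℕ}

theorem REPred.hornJustified (hS : REPred (· ∈ S))
    (hB : REPred fun x : α × ℕ => x.2 ∈ B x.1) :
    REPred fun x : α × ℕ × List ℕ => HornJustified S (B x.1) x.2.1 x.2.2 := by
  refine (hB.comp (Computable.fst.pair (Computable.fst.comp Computable.snd))).or
    (REPred.exists_snd (q := fun (x : α × ℕ × List ℕ) t => x.2.1 :: t ∈ S ∧ t ⊆ x.2.2)
      (REPred.and ?_ ?_))
  · exact hS.comp (Primrec.list_cons.comp (Primrec.fst.comp (Primrec.snd.comp Primrec.fst))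
      Primrec.snd).to_comp
  · exact (PrimrecRel.list_subset.comp Primrec.snd
      (Primrec.snd.comp (Primrec.snd.comp Primrec.fst))).computablePred.to_re

theorem REPred.isHornDerivation (hS : REPred (· ∈ S))
    (hB : REPred fun x : α × ℕ => x.2 ∈ B x.1) :
    REPred fun x : α × List ℕ => IsHornDerivation S (B x.1) x.2 := by
  have hentry : Computable fun y : (α × List ℕ) × ℕ =>
      (y.1.1, y.1.2.getD y.2 0, y.1.2.drop (y.2 + 1)) :=
    ((Primrec.fst.comp Primrec.fst).pair
      (((Primrec.list_getD 0).comp (Primrec.snd.comp Primrec.fst) Primrec.snd).pair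
        (Primrec.list_drop.comp (Primrec.succ.comp Primrec.snd)
          (Primrec.snd.comp Primrec.fst)))).to_comp
  have h := REPred.forall_lt (q := fun (x : α × List ℕ) i =>
    HornJustified S (B x.1) (x.2.getD i 0) (x.2.drop (i + 1))) ((hS.hornJustified hB).comp hentry)
  exact (h.comp (Computable.id.pair (Primrec.list_length.comp Primrec.snd).to_comp)).of_eq
    fun _ => isHornDerivation_iff_forall_lt.symm

theorem REPred.mem_QVclosure (hS : REPred (· ∈ S))
    (hB : REPred fun x : α × ℕ => x.2 ∈ B x.1) :
    REPred fun x : α × ℕ => x.2 ∈ QVclosure S (B x.1) := by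
  refine (REPred.exists_snd
    (q := fun (x : α × ℕ) L => IsHornDerivation S (B x.1) L ∧ x.2 ∈ L) (REPred.and ?_ ?_)).of_eq
    fun _ => mem_QVclosure_iff_exists_isHornDerivation.symm
  · exact (hS.isHornDerivation hB).comp ((Computable.fst.comp Computable.fst).pair Computable.snd)
  · exact (PrimrecRel.list_mem.comp (Primrec.snd.comp Primrec.fst)
      Primrec.snd).computablePred.to_re

end RE

theorem notMem_iff_mem_QVclosure_insert {S : Set (List ℕ)} {X Y : Set ℕ} (hX : QVMaximal S X)
    (hYX : QVclosure S Y = X) {z : ℕ} (hz : z ∉ X) (x : ℕ) :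
    x ∉ X ↔ z ∈ QVclosure S (insert x Y) := by
  have hY : Y ⊆ X := hYX ▸ subset_QVclosure S Y
  constructor
  · intro hx
    have hXZ : X ⊆ QVclosure S (insert x Y) := hYX ▸ QVclosure_subset (QVclosure_mem_QV S _)
      ((Set.subset_insert x Y).trans (subset_QVclosure S _))
    rcases hX.2 _ (QVclosure_mem_QV S _) hXZ with hZ | hZ
    · exact absurd (hZ ▸ subset_QVclosure S _ (Set.mem_insert x Y)) hx
    · exact hZ ▸ Set.mem_univ z
  · intro hzZ hx
    exact hz (QVclosure_subset hX.1 (Set.insert_subset hx hY) hzZ)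

theorem computable_of_maximal_recursively_presented_general (S : Set (List ℕ))
    (hS : REPred (· ∈ S))
    (X : Set ℕ) (hX : QVMaximal S X)
    (hpres : ∃ Y : Set ℕ, REPred (· ∈ Y) ∧ QVclosure S Y = X) :
    ComputablePred (· ∈ X) := by
  obtain ⟨Y, hY, hYX⟩ := hpres
  by_cases hU : X = Set.univ
  · exact ComputablePred.computable_iff.2 ⟨fun _ => true, Computable.const true, by simp [hU]⟩
  obtain ⟨z, hz⟩ := Set.ne_univ_iff_exists_notMem X |>.1 hU
  have hXre : REPred (· ∈ X) := by
    have h := REPred.mem_QVclosure hS (B := fun _ : Unit => Y) (hY.comp Computable.snd)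
    exact (h.comp ((Computable.const ()).pair Computable.id)).of_eq fun _ => hYX ▸ Iff.rfl
  have hXcre : REPred (· ∉ X) := by
    have hins : REPred fun x : ℕ × ℕ => x.2 ∈ insert x.1 Y :=
      (Primrec.eq.comp Primrec.snd Primrec.fst).computablePred.to_re.or (hY.comp Computable.snd)
    exact ((REPred.mem_QVclosure hS (B := fun x => insert x Y) hins).comp
      (Computable.id.pair (Computable.const z))).of_eq
        fun x => (notMem_iff_mem_QVclosure_insert hX hYX hz x).symm
  exact ComputablePred.computable_iff_re_compl_re'.2 ⟨hXre, hXcre⟩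

/-- A maximal, recursively presented point of an r.e. quasivariety is computable. -/
theorem computable_of_maximal_recursively_presented (S : Set (List ℕ))
    (hne : ∀ l ∈ S, l ≠ []) (hS : REPred (· ∈ S))
    (X : Set ℕ) (hX : QVMaximal S X)
    (hpres : ∃ Y : Set ℕ, REPred (· ∈ Y) ∧ QVclosure S Y = X) :
    ComputablePred (· ∈ X) :=
  computable_of_maximal_recursively_presented_general S hS X hX hpres
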